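/- (SC-AdaNGD_1, general case.) Let H > 0, let f : ℝ^d → ℝ be differentiable and H-strongly convex with ‖∇f(x)‖ ≤ G for all x ∈ K, and let x_1, …, x_T and x̄_T be the SC-AdaNGD_k iterates and output with k = 1, with g_t := ∇f(x_t) ≠ 0 for all t = 1, …, T. Then f(x̄_T) − min_{x ∈ K} f(x) ≤ G·(1 + log(Σ_{t=1}^T G/‖g_t‖)) / (2H Σ_{t=1}^T 1/‖g_t‖) ≤ G²(1 + log T) / (2 H T). -/

import Mathlib

/-!
Write `a_t = ‖g_t‖⁻¹` and `S_t = a_1 + ⋯ + a_t`, so that the step is `a_t / (H S_t)`. The projection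
does not increase distances to points of `K`, and strong convexity bounds `⟪g_t, x_t - z⟫` from below;
together they give, for every `z ∈ K`,
`a_t (f x_t - f z) ≤ (H/2) S_{t-1} ‖x_t - z‖² - (H/2) S_t ‖x_{t+1} - z‖² + 1 / (2 H S_t)`,
which telescopes. Since `a_t / S_t ≤ log S_t - log S_{t-1}` and `a_t ≥ 1 / G`, the sum of the
`1 / S_t` is at most `G (1 + log (G S_T))`, and Jensen's inequality passes the weighted bound on to
`x̄_T`. The second inequality holds because `(1 + log u) / u` decreases on `[1, ∞)` and `G S_T ≥ T`.
-/

open Finset Real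
open scoped RealInnerProductSpace

theorem div_add_le_log_add_sub_log {s a : ℝ} (hs : 0 < s) (ha : 0 ≤ a) :
    a / (s + a) ≤ log (s + a) - log s := by
  have hsa : 0 < s + a := by linarith
  have h := one_sub_inv_le_log_of_pos (div_pos hsa hs)
  rwa [inv_div, log_div hsa.ne' hs.ne', one_sub_div hsa.ne', add_sub_cancel_left] at h

theorem sum_inv_partial_sum_le {G : ℝ} (hG : 0 < G) {a : ℕ → ℝ} {T : ℕ} (hT : 1 ≤ T)
    (ha : ∀ t ∈ Icc 1 T, G⁻¹ ≤ a t) :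
    ∑ t ∈ Icc 1 T, (∑ τ ∈ Icc 1 t, a τ)⁻¹ ≤ G * (1 + log (G * ∑ t ∈ Icc 1 T, a t)) := by
  induction T, hT using Nat.le_induction with
  | base =>
    have ha1 : G⁻¹ ≤ a 1 := ha 1 (by simp)
    have hlog : 0 ≤ log (G * a 1) :=
      log_nonneg (by simpa [hG.ne'] using mul_le_mul_of_nonneg_left ha1 hG.le)
    simp only [Icc_self, sum_singleton]
    nlinarith [(inv_le_comm₀ ((inv_pos.mpr hG).trans_le ha1) hG).mpr ha1]
  | succ n hn ih =>
    set S := ∑ t ∈ Icc 1 n, a t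
    have han : G⁻¹ ≤ a (n + 1) := ha (n + 1) (by simp)
    have hS : 0 < S := sum_pos (fun t ht => (inv_pos.mpr hG).trans_le
      (ha t (Icc_subset_Icc_right n.le_succ ht))) (nonempty_Icc.mpr hn)
    have hlog := div_add_le_log_add_sub_log hS ((inv_pos.mpr hG).le.trans han)
    have hSa : 0 < S + a (n + 1) := by linarith [(inv_pos.mpr hG).trans_le han]
    have hlast : (S + a (n + 1))⁻¹ ≤ G * (log (G * (S + a (n + 1))) - log (G * S)) := by
      rw [log_mul hG.ne' hSa.ne', log_mul hG.ne' hS.ne', add_sub_add_left_eq_sub]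
      calc (S + a (n + 1))⁻¹ ≤ G * (a (n + 1) / (S + a (n + 1))) := by
            rw [mul_div, le_div_iff₀ hSa, inv_mul_cancel₀ hSa.ne']
            simpa [hG.ne'] using mul_le_mul_of_nonneg_left han hG.le
        _ ≤ _ := mul_le_mul_of_nonneg_left hlog hG.le
    rw [sum_Icc_succ_top (by omega), sum_Icc_succ_top (by omega)]
    linarith [ih fun t ht => ha t (Icc_subset_Icc_right n.le_succ ht)]

theorem antitoneOn_one_add_log_div_self : AntitoneOn (fun u => (1 + log u) / u) (Set.Ici 1) := by
  intro t (ht : 1 ≤ t) u _ htu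
  have ht0 : 0 < t := by linarith
  have hu0 : 0 < u := by linarith
  have hlog := log_le_sub_one_of_pos (div_pos hu0 ht0)
  rw [log_div hu0.ne' ht0.ne', div_sub_one ht0.ne', le_div_iff₀' ht0] at hlog
  change (1 + log u) / u ≤ (1 + log t) / t
  rw [div_le_div_iff₀ hu0 ht0]
  nlinarith [log_nonneg ht]

section InnerProductSpace

variable {E : Type*} [NormedAddCommGroup E] [InnerProductSpace ℝ E]

theorem Convex.norm_sub_le_of_forall_norm_sub_le {K : Set E} (hK : Convex ℝ K) {y p z : E}
    (hp : p ∈ K) (hmin : ∀ w ∈ K, ‖p - y‖ ≤ ‖w - y‖) (hz : z ∈ K) : ‖p - z‖ ≤ ‖y - z‖ := by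
  have : Nonempty K := ⟨⟨p, hp⟩⟩
  have hinf : ‖y - p‖ = ⨅ w : K, ‖y - w‖ :=
    le_antisymm (le_ciInf fun w => by simpa only [norm_sub_rev y] using hmin w w.2)
      (ciInf_le ⟨0, Set.forall_mem_range.2 fun _ => norm_nonneg _⟩ (⟨p, hp⟩ : K))
  have hvar : ⟪y - p, z - p⟫ ≤ 0 := (norm_eq_iInf_iff_real_inner_le_zero hK hp).mp hinf z hz
  have hpyth : ‖y - z‖ ^ 2 = ‖y - p‖ ^ 2 - 2 * ⟪y - p, z - p⟫ + ‖z - p‖ ^ 2 := by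
    rw [← norm_sub_sq_real, sub_sub_sub_cancel_right]
  rw [norm_sub_rev p z]
  nlinarith [sq_nonneg ‖y - p‖, norm_nonneg (z - p), norm_nonneg (y - z)]

theorem Convex.norm_sub_sq_le_of_projected_step {K : Set E} (hK : Convex ℝ K) {x g p z : E}
    {γ : ℝ} (hp : p ∈ K) (hmin : ∀ w ∈ K, ‖p - (x - γ • g)‖ ≤ ‖w - (x - γ • g)‖) (hz : z ∈ K) :
    ‖p - z‖ ^ 2 ≤ ‖x - z‖ ^ 2 - 2 * γ * ⟪g, x - z⟫ + γ ^ 2 * ‖g‖ ^ 2 := by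
  have h := hK.norm_sub_le_of_forall_norm_sub_le hp hmin hz
  calc ‖p - z‖ ^ 2 ≤ ‖(x - z) - γ • g‖ ^ 2 := by
        rw [sub_right_comm]; exact pow_le_pow_left₀ (norm_nonneg _) h 2
    _ = _ := by
        rw [norm_sub_sq_real, real_inner_smul_right, norm_smul, real_inner_comm, mul_pow,
          Real.norm_eq_abs, sq_abs]
        ring

theorem weight_mul_sub_le_of_step {f : E → ℝ} {H a s : ℝ} (hH : 0 < H) (ha : 0 ≤ a)
    (hsa : 0 < s + a) {x g x' z : E} (hsc : f x + ⟪g, z - x⟫ + H / 2 * ‖x - z‖ ^ 2 ≤ f z)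
    (hstep : ‖x' - z‖ ^ 2 ≤ ‖x - z‖ ^ 2 - 2 * (a / (H * (s + a))) * ⟪g, x - z⟫
      + (a / (H * (s + a))) ^ 2 * ‖g‖ ^ 2) :
    a * (f x - f z) ≤ H / 2 * s * ‖x - z‖ ^ 2 - H / 2 * (s + a) * ‖x' - z‖ ^ 2
      + (a * ‖g‖) ^ 2 / (2 * H * (s + a)) := by
  have hscaled := mul_le_mul_of_nonneg_left hstep (by positivity : 0 ≤ H * (s + a) / 2)
  have hexpand : H * (s + a) / 2 * (‖x - z‖ ^ 2 - 2 * (a / (H * (s + a))) * ⟪g, x - z⟫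
      + (a / (H * (s + a))) ^ 2 * ‖g‖ ^ 2) = H * (s + a) / 2 * ‖x - z‖ ^ 2 - a * ⟪g, x - z⟫
      + (a * ‖g‖) ^ 2 / (2 * H * (s + a)) := by
    field_simp
  rw [← neg_sub x z, inner_neg_right] at hsc
  linarith [mul_le_mul_of_nonneg_left hsc ha]

theorem sum_weight_mul_sub_le {K : Set E} (hK : Convex ℝ K) {proj : E → E}
    (hproj_mem : ∀ y, proj y ∈ K) (hproj_min : ∀ y, ∀ w ∈ K, ‖proj y - y‖ ≤ ‖w - y‖)
    {f : E → ℝ} {H : ℝ} (hH : 0 < H) {T : ℕ} {x g : ℕ → E} {a : ℕ → ℝ}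
    (ha : ∀ t ∈ Icc 1 T, 0 < a t)
    (hsc : ∀ t ∈ Icc 1 T, ∀ z, f (x t) + ⟪g t, z - x t⟫ + H / 2 * ‖x t - z‖ ^ 2 ≤ f z)
    (hupd : ∀ t ∈ Icc 1 T, x (t + 1) = proj (x t - (a t / (H * ∑ τ ∈ Icc 1 t, a τ)) • g t))
    {z : E} (hz : z ∈ K) :
    ∑ t ∈ Icc 1 T, a t * (f (x t) - f z) ≤
      ∑ t ∈ Icc 1 T, (a t * ‖g t‖) ^ 2 / (2 * H * ∑ τ ∈ Icc 1 t, a τ) := by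
  set ψ : ℕ → ℝ := fun t => H / 2 * (∑ τ ∈ Ico 1 t, a τ) * ‖x t - z‖ ^ 2
  have hstep : ∀ t ∈ Icc 1 T, a t * (f (x t) - f z) + (ψ (t + 1) - ψ t) ≤
      (a t * ‖g t‖) ^ 2 / (2 * H * ∑ τ ∈ Icc 1 t, a τ) := by
    intro t ht
    have hsplit : ∑ τ ∈ Icc 1 t, a τ = ∑ τ ∈ Ico 1 t, a τ + a t := by
      rw [← Ico_add_one_right_eq_Icc, sum_Ico_succ_top (mem_Icc.mp ht).1]
    have hprev : 0 ≤ ∑ τ ∈ Ico 1 t, a τ := sum_nonneg fun τ hτ =>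
      (ha τ (Ico_subset_Icc_self.trans (Icc_subset_Icc_right (mem_Icc.mp ht).2) hτ)).le
    have hproj : ‖x (t + 1) - z‖ ^ 2 ≤ ‖x t - z‖ ^ 2
        - 2 * (a t / (H * ∑ τ ∈ Icc 1 t, a τ)) * ⟪g t, x t - z⟫
        + (a t / (H * ∑ τ ∈ Icc 1 t, a τ)) ^ 2 * ‖g t‖ ^ 2 := by
      rw [hupd t ht]
      exact hK.norm_sub_sq_le_of_projected_step (hproj_mem _) (hproj_min _) hz
    rw [hsplit] at hproj
    have := weight_mul_sub_le_of_step hH (ha t ht).le (by linarith [ha t ht]) (hsc t ht z) hproj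
    simp only [ψ]
    rw [Ico_add_one_right_eq_Icc, hsplit]
    linarith
  have hψ1 : ψ 1 = 0 := by simp [ψ]
  have hψ_nonneg : 0 ≤ ψ (T + 1) := by
    have : 0 ≤ ∑ τ ∈ Ico 1 (T + 1), a τ := sum_nonneg fun τ hτ =>
      (ha τ (by rwa [← Ico_add_one_right_eq_Icc])).le
    positivity
  have htel : ∑ t ∈ Icc 1 T, (ψ (t + 1) - ψ t) = ψ (T + 1) - ψ 1 := by
    rw [← Ico_add_one_right_eq_Icc]
    exact sum_Ico_sub (f := ψ) (by omega)
  have := sum_le_sum hstep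
  rw [sum_add_distrib, htel] at this
  linarith

theorem convexOn_univ_of_forall_add_inner_le {f : E → ℝ} (f' : E → E)
    (hf : ∀ x y, f x + ⟪f' x, y - x⟫ ≤ f y) : ConvexOn ℝ Set.univ f := by
  refine ⟨convex_univ, fun x _ y _ α β hα hβ hαβ => ?_⟩
  set c := α • x + β • y
  have hc : α • (x - c) + β • (y - c) = 0 := by
    rw [smul_sub, smul_sub, sub_add_sub_comm, ← add_smul, hαβ, one_smul, sub_self]
  have hinner : α * ⟪f' c, x - c⟫ + β * ⟪f' c, y - c⟫ = 0 := by
    rw [← real_inner_smul_right, ← real_inner_smul_right, ← inner_add_right, hc, inner_zero_right]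
  have hfc : f c = α * f c + β * f c := by rw [← add_mul, hαβ, one_mul]
  simp only [smul_eq_mul]
  linarith [mul_le_mul_of_nonneg_left (hf c x) hα, mul_le_mul_of_nonneg_left (hf c y) hβ]

theorem ConvexOn.map_weighted_average_sub_le {ι : Type*} {C : Set E} {f : E → ℝ}
    (hf : ConvexOn ℝ C f) {s : Finset ι} {a : ι → ℝ} (ha : ∀ i ∈ s, 0 ≤ a i)
    (hS : 0 < ∑ i ∈ s, a i) {p : ι → E} (hp : ∀ i ∈ s, p i ∈ C) (z : E) :
    f (∑ i ∈ s, (a i / ∑ j ∈ s, a j) • p i) - f z ≤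
      (∑ i ∈ s, a i * (f (p i) - f z)) / ∑ i ∈ s, a i := by
  have hjensen := hf.map_sum_le (fun i hi => div_nonneg (ha i hi) hS.le)
    (by rw [← sum_div, div_self hS.ne']) hp
  have hsplit : (∑ i ∈ s, a i * (f (p i) - f z)) / ∑ i ∈ s, a i =
      ∑ i ∈ s, (a i / ∑ j ∈ s, a j) • f (p i) - f z := by
    simp only [smul_eq_mul, mul_sub, sum_sub_distrib, ← sum_mul, sub_div]
    rw [mul_div_right_comm, div_self hS.ne', one_mul, sum_div]
    simp only [div_mul_eq_mul_div]
  linarith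

theorem weighted_average_sub_le_of_normalized_projected_steps {K : Set E} (hK : Convex ℝ K)
    {proj : E → E} (hproj_mem : ∀ y, proj y ∈ K)
    (hproj_min : ∀ y, ∀ w ∈ K, ‖proj y - y‖ ≤ ‖w - y‖) {f : E → ℝ} {f' : E → E} {H G : ℝ}
    (hH : 0 < H) (hG : 0 < G) (hsc : ∀ x y, f x + ⟪f' x, y - x⟫ + H / 2 * ‖x - y‖ ^ 2 ≤ f y)
    {T : ℕ} (hT : 1 ≤ T) {x g : ℕ → E} (hg : ∀ t ∈ Icc 1 T, g t = f' (x t))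
    (hg_pos : ∀ t ∈ Icc 1 T, 0 < ‖g t‖) (hg_le : ∀ t ∈ Icc 1 T, ‖g t‖ ≤ G)
    (hupd : ∀ t ∈ Icc 1 T,
      x (t + 1) = proj (x t - (‖g t‖⁻¹ / (H * ∑ τ ∈ Icc 1 t, ‖g τ‖⁻¹)) • g t))
    {z : E} (hz : z ∈ K) :
    f (∑ t ∈ Icc 1 T, (‖g t‖⁻¹ / ∑ τ ∈ Icc 1 T, ‖g τ‖⁻¹) • x t) - f z ≤
      G * (1 + log (G * ∑ t ∈ Icc 1 T, ‖g t‖⁻¹)) / (2 * H * ∑ t ∈ Icc 1 T, ‖g t‖⁻¹) := by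
  have hS : 0 < ∑ t ∈ Icc 1 T, ‖g t‖⁻¹ :=
    sum_pos (fun t ht => inv_pos.mpr (hg_pos t ht)) ⟨1, mem_Icc.mpr ⟨le_rfl, hT⟩⟩
  have hregret := sum_weight_mul_sub_le hK hproj_mem hproj_min hH
    (fun t ht => inv_pos.mpr (hg_pos t ht)) (fun t ht z => hg t ht ▸ hsc (x t) z) hupd hz
  have hunit : ∀ t ∈ Icc 1 T, (‖g t‖⁻¹ * ‖g t‖) ^ 2 / (2 * H * ∑ τ ∈ Icc 1 t, ‖g τ‖⁻¹) =
      (2 * H)⁻¹ * (∑ τ ∈ Icc 1 t, ‖g τ‖⁻¹)⁻¹ := fun t ht => by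
    rw [inv_mul_cancel₀ (hg_pos t ht).ne', one_pow, one_div, mul_inv]
  rw [sum_congr rfl hunit, ← mul_sum] at hregret
  have hlogsum := sum_inv_partial_sum_le hG hT fun t ht => inv_anti₀ (hg_pos t ht) (hg_le t ht)
  have hconv : ConvexOn ℝ Set.univ f := convexOn_univ_of_forall_add_inner_le f'
    fun x y => (le_add_of_nonneg_right (mul_nonneg (by linarith) (sq_nonneg _))).trans (hsc x y)
  calc _ ≤ (∑ t ∈ Icc 1 T, ‖g t‖⁻¹ * (f (x t) - f z)) / ∑ t ∈ Icc 1 T, ‖g t‖⁻¹ :=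
        hconv.map_weighted_average_sub_le (fun t _ => inv_nonneg.mpr (norm_nonneg (g t))) hS
          (fun _ _ => Set.mem_univ _) z
    _ ≤ (2 * H)⁻¹ * (G * (1 + log (G * ∑ t ∈ Icc 1 T, ‖g t‖⁻¹))) / ∑ t ∈ Icc 1 T, ‖g t‖⁻¹ :=
        div_le_div_of_nonneg_right
          (hregret.trans (mul_le_mul_of_nonneg_left hlogsum (by positivity))) hS.le
    _ = _ := by field_simp

end InnerProductSpace

theorem sc_adangd_one_general_general
    {d : ℕ} (T : ℕ) (hT : 1 ≤ T) (H G : ℝ) (hH : 0 < H)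
    (K : Set (EuclideanSpace ℝ (Fin d)))
    (hKconv : Convex ℝ K)
    (proj : EuclideanSpace ℝ (Fin d) → EuclideanSpace ℝ (Fin d))
    (hproj_mem : ∀ y, proj y ∈ K)
    (hproj_min : ∀ y, ∀ z ∈ K, ‖proj y - y‖ ≤ ‖z - y‖)
    (f : EuclideanSpace ℝ (Fin d) → ℝ)
    (hsc : ∀ x y, f x + (inner ℝ (gradient f x) (y - x) : ℝ) + (H / 2) * ‖x - y‖ ^ 2 ≤ f y)
    (hG : ∀ x ∈ K, ‖gradient f x‖ ≤ G)
    (x : ℕ → EuclideanSpace ℝ (Fin d)) (g : ℕ → EuclideanSpace ℝ (Fin d)) (η : ℕ → ℝ)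
    (hx1 : x 1 ∈ K)
    (hg : ∀ t, g t = gradient f (x t))
    (hgne : ∀ t ∈ Finset.Icc 1 T, g t ≠ 0)
    (hη : ∀ t, η t = 1 / (H * ∑ τ ∈ Finset.Icc 1 t, (‖g τ‖)⁻¹))
    (hupd : ∀ t ∈ Finset.Icc 1 T, x (t + 1) = proj (x t - (η t / ‖g t‖) • g t))
    (xbar : EuclideanSpace ℝ (Fin d))
    (hxbar : xbar = ∑ t ∈ Finset.Icc 1 T, (((‖g t‖)⁻¹) / ∑ τ ∈ Finset.Icc 1 T, (‖g τ‖)⁻¹) • x t)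
    :
    (∀ xs ∈ K,
      f xbar - f xs ≤
        G * (1 + Real.log (∑ t ∈ Finset.Icc 1 T, G / ‖g t‖)) /
          (2 * H * ∑ t ∈ Finset.Icc 1 T, (‖g t‖)⁻¹)) ∧
    G * (1 + Real.log (∑ t ∈ Finset.Icc 1 T, G / ‖g t‖)) /
        (2 * H * ∑ t ∈ Finset.Icc 1 T, (‖g t‖)⁻¹) ≤
      G ^ 2 * (1 + Real.log T) / (2 * H * T) := by
  have hxK : ∀ t ∈ Icc 1 T, x t ∈ K := by
    rintro (_ | _ | t) ht
    · simp at ht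
    · exact hx1
    · rw [hupd (t + 1) (by simp only [mem_Icc] at ht ⊢; omega)]
      exact hproj_mem _
  have hg_pos : ∀ t ∈ Icc 1 T, 0 < ‖g t‖ := fun t ht => norm_pos_iff.mpr (hgne t ht)
  have hg_le : ∀ t ∈ Icc 1 T, ‖g t‖ ≤ G := fun t ht => hg t ▸ hG _ (hxK t ht)
  have h1T : 1 ∈ Icc 1 T := mem_Icc.mpr ⟨le_rfl, hT⟩
  have hGpos : 0 < G := (hg_pos 1 h1T).trans_le (hg_le 1 h1T)
  have hGS : ∑ t ∈ Icc 1 T, G / ‖g t‖ = G * ∑ t ∈ Icc 1 T, ‖g t‖⁻¹ := by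
    simp only [div_eq_mul_inv, mul_sum]
  rw [hGS]
  refine ⟨fun xs hxs => hxbar ▸ weighted_average_sub_le_of_normalized_projected_steps hKconv
    hproj_mem hproj_min hH hGpos hsc hT (fun t _ => hg t) hg_pos hg_le
    (fun t ht => by rw [hupd t ht, hη, one_div, div_eq_mul_inv, div_eq_mul_inv, mul_comm]) hxs, ?_⟩
  have hT_le : (T : ℝ) ≤ G * ∑ t ∈ Icc 1 T, ‖g t‖⁻¹ := by
    rw [← hGS]
    simpa using sum_le_sum fun t ht => (one_le_div (hg_pos t ht)).mpr (hg_le t ht)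
  have hratio := antitoneOn_one_add_log_div_self (Set.mem_Ici.mpr (Nat.one_le_cast.mpr hT))
    (Set.mem_Ici.mpr ((Nat.one_le_cast.mpr hT).trans hT_le)) hT_le
  have hS : 0 < ∑ t ∈ Icc 1 T, ‖g t‖⁻¹ := sum_pos (fun t ht => inv_pos.mpr (hg_pos t ht)) ⟨1, h1T⟩
  calc _ = G ^ 2 / (2 * H) * ((1 + log (G * ∑ t ∈ Icc 1 T, ‖g t‖⁻¹)) /
        (G * ∑ t ∈ Icc 1 T, ‖g t‖⁻¹)) := by field_simp
    _ ≤ G ^ 2 / (2 * H) * ((1 + log T) / T) := mul_le_mul_of_nonneg_left hratio (by positivity)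
    _ = _ := by field_simp

theorem sc_adangd_one_general
    {d : ℕ} (T : ℕ) (hT : 1 ≤ T) (H G : ℝ) (hH : 0 < H)
    (K : Set (EuclideanSpace ℝ (Fin d)))
    (hKne : K.Nonempty) (hKcl : IsClosed K) (hKbdd : Bornology.IsBounded K)
    (hKconv : Convex ℝ K)
    (proj : EuclideanSpace ℝ (Fin d) → EuclideanSpace ℝ (Fin d))
    (hproj_mem : ∀ y, proj y ∈ K)
    (hproj_min : ∀ y, ∀ z ∈ K, ‖proj y - y‖ ≤ ‖z - y‖)
    (f : EuclideanSpace ℝ (Fin d) → ℝ)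
    (hdiff : Differentiable ℝ f)
    (hsc : ∀ x y, f x + (inner ℝ (gradient f x) (y - x) : ℝ) + (H / 2) * ‖x - y‖ ^ 2 ≤ f y)
    (hG : ∀ x ∈ K, ‖gradient f x‖ ≤ G)
    (x : ℕ → EuclideanSpace ℝ (Fin d)) (g : ℕ → EuclideanSpace ℝ (Fin d)) (η : ℕ → ℝ)
    (hx1 : x 1 ∈ K)
    (hg : ∀ t, g t = gradient f (x t))
    (hgne : ∀ t ∈ Finset.Icc 1 T, g t ≠ 0)
    (hη : ∀ t, η t = 1 / (H * ∑ τ ∈ Finset.Icc 1 t, (‖g τ‖)⁻¹))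
    (hupd : ∀ t ∈ Finset.Icc 1 T, x (t + 1) = proj (x t - (η t / ‖g t‖) • g t))
    (xbar : EuclideanSpace ℝ (Fin d))
    (hxbar : xbar = ∑ t ∈ Finset.Icc 1 T, (((‖g t‖)⁻¹) / ∑ τ ∈ Finset.Icc 1 T, (‖g τ‖)⁻¹) • x t)
    :
    (∀ xs ∈ K,
      f xbar - f xs ≤
        G * (1 + Real.log (∑ t ∈ Finset.Icc 1 T, G / ‖g t‖)) /
          (2 * H * ∑ t ∈ Finset.Icc 1 T, (‖g t‖)⁻¹)) ∧
    G * (1 + Real.log (∑ t ∈ Finset.Icc 1 T, G / ‖g t‖)) /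
        (2 * H * ∑ t ∈ Finset.Icc 1 T, (‖g t‖)⁻¹) ≤
      G ^ 2 * (1 + Real.log T) / (2 * H * T) :=
  sc_adangd_one_general_general T hT H G hH K hKconv proj hproj_mem hproj_min f hsc hG x g η hx1 hg
    hgne hη hupd xbar hxbar
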